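/- Completeness of the vertex elimination s-t-reachability encoding: if φ is satisfied by a model M such that t is reachable from s in G_M, and the elimination ordering O places s and t after all other vertices, then φ conjoined with the s-t-reachability encoding (clauses e'_{i,j} → e_{i,j} ∨ ⋁ t_{i,k,j}, t_{i,k,j} → e'_{i,k}∧e'_{k,j}, and unit clause e'_{s,t}) is satisfiable. -/

import Mathlib

/-- The vertex elimination sequence: `elimSeq E i` is the edge relation of the
graph `G_i` obtained from `G = G_0` by successively eliminating the vertices
`0, 1, ..., i-1` (the elimination ordering is the index order on `Fin n`).
Eliminating a vertex removes it and connects each of its in-neighbors to each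
of its out-neighbors (no self-loops). -/
def elimSeq {n : ℕ} (E : Fin n → Fin n → Prop) : ℕ → Fin n → Fin n → Prop
  | 0 => E
  | (i+1) => fun j k =>
      j.val ≠ i ∧ k.val ≠ i ∧
      (elimSeq E i j k ∨
        (j ≠ k ∧ ∃ m : Fin n, m.val = i ∧ elimSeq E i j m ∧ elimSeq E i m k))

/-- The vertex elimination graph `G*`: the union of all the `G_i`. -/
def estar {n : ℕ} (E : Fin n → Fin n → Prop) (j k : Fin n) : Prop :=
  ∃ i, elimSeq E i j k

/-- `tri E a b c` : the triangle recording that the edge `(a, c)` is created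
while eliminating the (middle) vertex `b`. -/
def tri {n : ℕ} (E : Fin n → Fin n → Prop) (a b c : Fin n) : Prop :=
  a ≠ c ∧ elimSeq E b.val a b ∧ elimSeq E b.val b c

/-- A directed graph is acyclic iff no vertex lies on a nonempty closed walk. -/
def Acyclic {n : ℕ} (E : Fin n → Fin n → Prop) : Prop :=
  ∀ v, ¬ Relation.TransGen E v v

/-- The graph `G_M` induced by a model `σ` via the edge variables `e`. -/
def modelGraph {n : ℕ} {Var : Type*} (E : Fin n → Fin n → Prop)
    (e : Fin n → Fin n → Var) (σ : Var → Prop) : Fin n → Fin n → Prop :=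
  fun i j => E i j ∧ σ (e i j)

/-!
Take `σ' = σ`, `e'` the elimination graph of `G_M` and `t'` its triangle set. Every edge of
that elimination graph is an edge of `G_M` or created by a triangle, and each triangle of
`G_M` is one of `G`, so the clauses hold. For the unit clause:
eliminating a vertex `v` preserves reachability between vertices other than `v` (a walk
through `v` is shortcut by the fill edges), so `t` is still reachable from `s` once every
vertex but `s` and `t` has been eliminated; a walk in a graph on the two vertices `s ≠ t`
is then the edge `(s, t)`.
-/

open Relation

/-- The walk `x ⟶* y` avoiding `v` obtained by replacing each passage `p → v ⟶* v → q`
through `v` by the shortcut `p → q`. -/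
theorem Relation.ReflTransGen.bypass {α : Type*} {R : α → α → Prop} {v x y : α}
    (hx : x ≠ v) (hy : y ≠ v) (h : ReflTransGen R x y) :
    ReflTransGen (fun p q => p ≠ v ∧ q ≠ v ∧ (R p q ∨ R p v ∧ R v q)) x y := by
  set R' := fun p q => p ≠ v ∧ q ≠ v ∧ (R p q ∨ R p v ∧ R v q)
  suffices key : ∀ a, ReflTransGen R a y →
      (a ≠ v → ReflTransGen R' a y) ∧ (a = v → ∀ p ≠ v, R p v → ReflTransGen R' p y) from
    (key x h).1 hx
  intro a ha
  induction ha using ReflTransGen.head_induction_on with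
  | refl => exact ⟨fun _ => .refl, fun hyv => absurd hyv hy⟩
  | @head a c hac _ ih =>
    obtain ⟨ih_ne, ih_eq⟩ := ih
    constructor
    · intro hav
      by_cases hcv : c = v
      · exact ih_eq hcv a hav (hcv ▸ hac)
      · exact .head ⟨hav, hcv, .inl hac⟩ (ih_ne hcv)
    · intro hav p hpv hpv'
      by_cases hcv : c = v
      · exact ih_eq hcv p hpv (hcv ▸ hpv')
      · exact .head ⟨hpv, hcv, .inr ⟨hpv', hav ▸ hac⟩⟩ (ih_ne hcv)

theorem Relation.ReflTransGen.eq_or_rel_of_forall_rel_imp {α : Type*} {R : α → α → Prop}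
    {s t : α} (htarget : ∀ a b, R a b → b = s ∨ b = t) (h : ReflTransGen R s t) :
    s = t ∨ R s t := by
  suffices key : ∀ a, ReflTransGen R a t → a = s → s = t ∨ R s t from key s h rfl
  intro a ha
  induction ha using ReflTransGen.head_induction_on with
  | refl => rintro rfl; exact .inl rfl
  | @head a c hac _ ih =>
    rintro rfl
    rcases htarget a c hac with hcs | hct
    · exact ih hcs
    · exact .inr (hct ▸ hac)

variable {n : ℕ}

theorem elimSeq_mono {E F : Fin n → Fin n → Prop} (hEF : ∀ a b, E a b → F a b) :
    ∀ i a b, elimSeq E i a b → elimSeq F i a b := by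
  intro i
  induction i with
  | zero => exact hEF
  | succ i ih =>
    rintro a b ⟨ha, hb, h | ⟨hab, m, hm, ham, hmb⟩⟩
    · exact ⟨ha, hb, .inl (ih a b h)⟩
    · exact ⟨ha, hb, .inr ⟨hab, m, hm, ih a m ham, ih m b hmb⟩⟩

theorem tri_mono {E F : Fin n → Fin n → Prop} (hEF : ∀ a b, E a b → F a b) {a b c : Fin n}
    (h : tri E a b c) : tri F a b c :=
  ⟨h.1, elimSeq_mono hEF _ _ _ h.2.1, elimSeq_mono hEF _ _ _ h.2.2⟩

theorem rel_or_tri_of_elimSeq {E : Fin n → Fin n → Prop} :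
    ∀ {i a b}, elimSeq E i a b → E a b ∨ ∃ m, tri E a m b := by
  intro i
  induction i with
  | zero => exact .inl
  | succ i ih =>
    rintro a b ⟨-, -, h | ⟨hab, m, rfl, ham, hmb⟩⟩
    · exact ih h
    · exact .inr ⟨m, hab, ham, hmb⟩

theorem le_val_of_elimSeq {E : Fin n → Fin n → Prop} :
    ∀ {i a b}, elimSeq E i a b → i ≤ a.val ∧ i ≤ b.val := by
  intro i
  induction i with
  | zero => intro a b _; omega
  | succ i ih =>
    rintro a b ⟨ha, hb, h | ⟨-, m, -, ham, hmb⟩⟩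
    · have := ih h
      omega
    · have := (ih ham).1
      have := (ih hmb).2
      omega

theorem reflTransGen_elimSeq_succ {E : Fin n → Fin n → Prop} {v x y : Fin n}
    (hx : x ≠ v) (hy : y ≠ v) (h : ReflTransGen (elimSeq E v.val) x y) :
    ReflTransGen (elimSeq E (v.val + 1)) x y := by
  refine reflTransGen_closed ?_ x y (ReflTransGen.bypass hx hy h)
  rintro p q ⟨hp, hq, hpq | ⟨hpv, hvq⟩⟩
  · exact .single ⟨Fin.val_ne_of_ne hp, Fin.val_ne_of_ne hq, .inl hpq⟩
  · by_cases hpq : p = q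
    · exact hpq ▸ .refl
    · exact .single ⟨Fin.val_ne_of_ne hp, Fin.val_ne_of_ne hq, .inr ⟨hpq, v, rfl, hpv, hvq⟩⟩

theorem reflTransGen_elimSeq {E : Fin n → Fin n → Prop} {x y : Fin n}
    (h : ReflTransGen E x y) : ∀ i, i ≤ x.val → i ≤ y.val → ReflTransGen (elimSeq E i) x y := by
  intro i
  induction i with
  | zero => exact fun _ _ => h
  | succ i ih =>
    intro hx hy
    let v : Fin n := ⟨i, by omega⟩
    exact reflTransGen_elimSeq_succ (v := v) (Fin.ne_of_val_ne (Nat.ne_of_gt hx))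
      (Fin.ne_of_val_ne (Nat.ne_of_gt hy)) (ih (Nat.le_of_succ_le hx) (Nat.le_of_succ_le hy))

theorem estar_of_transGen {E : Fin n → Fin n → Prop} {s t : Fin n} (hst : s ≠ t)
    (horder : ∀ v : Fin n, v ≠ s → v ≠ t → v.val < s.val ∧ v.val < t.val)
    (hreach : TransGen E s t) : estar E s t := by
  set m := min s.val t.val
  refine ⟨m, ?_⟩
  have hwalk : ReflTransGen (elimSeq E m) s t :=
    reflTransGen_elimSeq hreach.to_reflTransGen m (min_le_left _ _) (min_le_right _ _)
  refine (hwalk.eq_or_rel_of_forall_rel_imp fun a b hab => ?_).resolve_left hst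
  by_contra! hb
  have := horder b hb.1 hb.2
  have := (le_val_of_elimSeq hab).2
  omega

/-- completeness of the vertex elimination s-t-reachability
encoding, where the elimination ordering places `s` and `t` after all other
vertices. -/
theorem stmt8 {n : ℕ} {Var : Type*} (E : Fin n → Fin n → Prop)
    (φ : (Var → Prop) → Prop) (e : Fin n → Fin n → Var)
    (s t : Fin n) (hst : s ≠ t)
    (horder : ∀ v : Fin n, v ≠ s → v ≠ t → v.val < s.val ∧ v.val < t.val)
    (σ : Var → Prop) (hφ : φ σ)
    (hreach : Relation.TransGen (modelGraph E e σ) s t) :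
    ∃ (σ' : Var → Prop) (e' : Fin n → Fin n → Prop)
      (t' : Fin n → Fin n → Fin n → Prop),
      φ σ' ∧
      (∀ i j, estar E i j → e' i j →
        ((E i j ∧ σ' (e i j)) ∨ ∃ k, tri E i k j ∧ t' i k j)) ∧
      (∀ i k j, tri E i k j → t' i k j → e' i k ∧ e' k j) ∧
      e' s t := by
  refine ⟨σ, estar (modelGraph E e σ), tri (modelGraph E e σ), hφ, ?_, ?_,
    estar_of_transGen hst horder hreach⟩
  · rintro i j - ⟨k, hk⟩
    rcases rel_or_tri_of_elimSeq hk with hM | ⟨m, hm⟩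
    · exact .inl hM
    · exact .inr ⟨m, tri_mono (fun _ _ => And.left) hm, hm⟩
  · rintro i k j - ⟨-, hik, hkj⟩
    exact ⟨⟨k.val, hik⟩, ⟨k.val, hkj⟩⟩
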